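/- For every pair A₁, A₂ of closed star bodies in ℝ^d, the Attouch–Wets distance is dominated by the radial Attouch–Wets distance: d_{AW}(A₁,A₂) ≤ d_{AW^r}(A₁,A₂). -/

import Mathlib

open scoped ENNReal

noncomputable section

/-- Radial function of a set `A ⊆ ℝ^d` in direction `θ`. -/
def radialFn {d : ℕ} (A : Set (EuclideanSpace ℝ (Fin d)))
    (θ : EuclideanSpace ℝ (Fin d)) : ℝ≥0∞ :=
  sSup (ENNReal.ofReal '' {r : ℝ | 0 ≤ r ∧ r • θ ∈ A})

/-- A star set: nonempty and closed under scaling by `t ∈ [0,1]`. -/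
def IsStarSet {d : ℕ} (A : Set (EuclideanSpace ℝ (Fin d))) : Prop :=
  A.Nonempty ∧ ∀ a ∈ A, ∀ t : ℝ, 0 ≤ t → t ≤ 1 → t • a ∈ A

/-- A star body: a radially closed star set. -/
def IsStarBody {d : ℕ} (A : Set (EuclideanSpace ℝ (Fin d))) : Prop :=
  IsStarSet A ∧ ∀ θ : EuclideanSpace ℝ (Fin d), ‖θ‖ = 1 → radialFn A θ ≠ ⊤ →
    (radialFn A θ).toReal • θ ∈ A

open scoped Classical in
/-- The radial distance from a point `x` to a star body `A`:
`0` if `x ∈ A`, and `‖x‖ - ρ_A(x/‖x‖)` otherwise. -/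
def radialDist {d : ℕ} (x : EuclideanSpace ℝ (Fin d))
    (A : Set (EuclideanSpace ℝ (Fin d))) : ℝ :=
  if x ∈ A then 0 else ‖x‖ - (radialFn A (‖x‖⁻¹ • x)).toReal

/-- The radial Attouch–Wets distance between star bodies. -/
def dAWr {d : ℕ} (A₁ A₂ : Set (EuclideanSpace ℝ (Fin d))) : ℝ :=
  ⨆ j : ℕ, min (1 / ((j : ℝ) + 1))
    (⨆ x : Metric.closedBall (0 : EuclideanSpace ℝ (Fin d)) ((j : ℝ) + 1),
      |radialDist (x : EuclideanSpace ℝ (Fin d)) A₁ -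
        radialDist (x : EuclideanSpace ℝ (Fin d)) A₂|)

/-- The Attouch–Wets distance between nonempty closed sets. -/
def dAW {d : ℕ} (C₁ C₂ : Set (EuclideanSpace ℝ (Fin d))) : ℝ :=
  ⨆ j : ℕ, min (1 / ((j : ℝ) + 1))
    (⨆ x : Metric.ball (0 : EuclideanSpace ℝ (Fin d)) ((j : ℝ) + 1),
      |Metric.infDist (x : EuclideanSpace ℝ (Fin d)) C₁ -
        Metric.infDist (x : EuclideanSpace ℝ (Fin d)) C₂|)

/-!
A point `a` of a star set `A₁` may be pulled radially onto the sphere of radius `‖x‖` without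
moving away from `x`, so `d(x, A₁)` is approximated by points `a ∈ A₁` with `‖a‖ ≤ ‖x‖`. For such
`a`, `d(x, A₂) ≤ d(a, A₂) + ‖x - a‖ ≤ d_r(a, A₂) + ‖x - a‖`, and `d_r(a, A₂)` is the radial gap
`|d_r(a, A₁) - d_r(a, A₂)|` at a point of the same ball as `x`, since `d_r(a, A₁) = 0`.
-/

open Metric

lemma norm_smul_inv_norm_smul {F : Type*} [NormedAddCommGroup F] [NormedSpace ℝ F] (x : F) :
    ‖x‖ • (‖x‖⁻¹ • x) = x := by
  rcases eq_or_ne x 0 with rfl | hx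
  · simp
  · exact smul_inv_smul₀ (norm_ne_zero_iff.mpr hx) x

lemma dist_norm_div_norm_smul_le {F : Type*} [NormedAddCommGroup F] [InnerProductSpace ℝ F]
    {x a : F} (h : ‖x‖ ≤ ‖a‖) : dist x ((‖x‖ / ‖a‖) • a) ≤ dist x a := by
  rcases eq_or_ne a 0 with rfl | ha
  · simp
  have ha0 : 0 < ‖a‖ := norm_pos_iff.mpr ha
  set t := ‖x‖ / ‖a‖
  have ht0 : 0 ≤ t := by positivity
  have ht1 : t ≤ 1 := div_le_one_of_le₀ h ha0.le
  have htn : t * ‖a‖ = ‖x‖ := div_mul_cancel₀ _ ha0.ne'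
  have hinner : inner ℝ x a ≤ ‖x‖ * ‖a‖ := real_inner_le_norm x a
  rw [dist_eq_norm, dist_eq_norm,
    ← pow_le_pow_iff_left₀ (norm_nonneg _) (norm_nonneg _) two_ne_zero,
    norm_sub_sq_real, norm_sub_sq_real, real_inner_smul_right, norm_smul,
    Real.norm_eq_abs, abs_of_nonneg ht0, mul_pow]
  -- the difference of the two sides is `(‖a‖ - ‖x‖)² + 2 (1 - t) (‖x‖‖a‖ - ⟪x, a⟫) ≥ 0`
  nlinarith [sq_nonneg (‖a‖ - ‖x‖), mul_nonneg (sub_nonneg.2 ht1) (sub_nonneg.2 hinner)]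

lemma ENNReal.toReal_sSup_ofReal_le {S : Set ℝ} {b : ℝ} (hb : 0 ≤ b) (h : ∀ r ∈ S, r ≤ b) :
    (sSup (ENNReal.ofReal '' S)).toReal ≤ b :=
  ENNReal.toReal_le_of_le_ofReal hb <| sSup_le <| by
    rintro _ ⟨r, hr, rfl⟩
    exact ENNReal.ofReal_le_ofReal (h r hr)

section StarSet

variable {d : ℕ}

lemma radialDist_of_mem {A : Set (EuclideanSpace ℝ (Fin d))} {x : EuclideanSpace ℝ (Fin d)}
    (hx : x ∈ A) : radialDist x A = 0 :=
  if_pos hx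

lemma radialDist_le_norm (A : Set (EuclideanSpace ℝ (Fin d))) (x : EuclideanSpace ℝ (Fin d)) :
    radialDist x A ≤ ‖x‖ := by
  unfold radialDist
  split_ifs
  · exact norm_nonneg x
  · exact sub_le_self _ ENNReal.toReal_nonneg

namespace IsStarSet

variable {A A₂ : Set (EuclideanSpace ℝ (Fin d))}

lemma zero_mem (h : IsStarSet A) : 0 ∈ A := by
  obtain ⟨a, ha⟩ := h.1
  simpa using h.2 a ha 0 le_rfl zero_le_one

lemma le_norm_of_smul_mem (h : IsStarSet A) {x : EuclideanSpace ℝ (Fin d)} (hx : x ∉ A)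
    {r : ℝ} (hr : 0 ≤ r) (hrx : r • (‖x‖⁻¹ • x) ∈ A) : r ≤ ‖x‖ := by
  by_contra! hlt
  have hr0 : 0 < r := (norm_nonneg x).trans_lt hlt
  have := h.2 _ hrx (‖x‖ / r) (by positivity) (div_le_one_of_le₀ hlt.le hr)
  rw [smul_smul, div_mul_cancel₀ _ hr0.ne', norm_smul_inv_norm_smul] at this
  exact hx this

lemma radialDist_nonneg (h : IsStarSet A) (x : EuclideanSpace ℝ (Fin d)) :
    0 ≤ radialDist x A := by
  unfold radialDist
  split_ifs with hx
  · rfl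
  · exact sub_nonneg.2 <| ENNReal.toReal_sSup_ofReal_le (norm_nonneg x)
      fun r hr => h.le_norm_of_smul_mem hx hr.1 hr.2

lemma infDist_le_radialDist (h : IsStarSet A) (x : EuclideanSpace ℝ (Fin d)) :
    infDist x A ≤ radialDist x A := by
  unfold radialDist
  split_ifs with hx
  · exact (infDist_zero_of_mem hx).le
  have hx0 : x ≠ 0 := (ne_of_mem_of_not_mem h.zero_mem hx).symm
  have hdist : infDist x A ≤ ‖x‖ := by
    simpa using infDist_le_dist_of_mem (x := x) h.zero_mem
  rw [le_sub_comm]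
  refine ENNReal.toReal_sSup_ofReal_le (sub_nonneg.2 hdist) fun r ⟨hr, hrx⟩ => ?_
  have hrle : r ≤ ‖x‖ := h.le_norm_of_smul_mem hx hr hrx
  have hsub : x - r • (‖x‖⁻¹ • x) = (‖x‖ - r) • (‖x‖⁻¹ • x) := by
    rw [sub_smul, norm_smul_inv_norm_smul]
  have : dist x (r • (‖x‖⁻¹ • x)) = ‖x‖ - r := by
    rw [dist_eq_norm, hsub, norm_smul, norm_smul, norm_inv, norm_norm,
      inv_mul_cancel₀ (norm_ne_zero_iff.mpr hx0), mul_one,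
      Real.norm_of_nonneg (sub_nonneg.2 hrle)]
  linarith [infDist_le_dist_of_mem (x := x) hrx]

lemma exists_norm_le_dist_le (h : IsStarSet A) (x : EuclideanSpace ℝ (Fin d))
    {a : EuclideanSpace ℝ (Fin d)} (ha : a ∈ A) :
    ∃ a' ∈ A, ‖a'‖ ≤ ‖x‖ ∧ dist x a' ≤ dist x a := by
  rcases le_or_gt ‖a‖ ‖x‖ with hle | hlt
  · exact ⟨a, ha, hle, le_rfl⟩
  have ha0 : 0 < ‖a‖ := (norm_nonneg x).trans_lt hlt
  refine ⟨(‖x‖ / ‖a‖) • a, h.2 a ha _ (by positivity) (div_le_one_of_le₀ hlt.le ha0.le),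
    ?_, dist_norm_div_norm_smul_le hlt.le⟩
  rw [norm_smul, Real.norm_of_nonneg (by positivity), div_mul_cancel₀ _ ha0.ne']

lemma infDist_le_infDist_add (h : IsStarSet A) (h₂ : IsStarSet A₂)
    (x : EuclideanSpace ℝ (Fin d)) {M : ℝ} (hM : ∀ a ∈ A, ‖a‖ ≤ ‖x‖ → radialDist a A₂ ≤ M) :
    infDist x A₂ ≤ infDist x A + M := by
  rw [← sub_le_iff_le_add, le_infDist h.1]
  intro a ha
  obtain ⟨a', ha', hnorm, hdist⟩ := h.exists_norm_le_dist_le x ha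
  have := h₂.infDist_le_radialDist a'
  linarith [hM a' ha' hnorm, infDist_le_infDist_add_dist (s := A₂) (x := x) (y := a')]

end IsStarSet

variable {A₁ A₂ : Set (EuclideanSpace ℝ (Fin d))}

lemma bddAbove_abs_radialDist_sub (h₁ : IsStarSet A₁) (h₂ : IsStarSet A₂) (c : ℝ) :
    BddAbove (Set.range fun y : closedBall (0 : EuclideanSpace ℝ (Fin d)) c =>
      |radialDist (y : EuclideanSpace ℝ (Fin d)) A₁ -
        radialDist (y : EuclideanSpace ℝ (Fin d)) A₂|) := by
  refine ⟨c, ?_⟩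
  rintro _ ⟨⟨y, hy⟩, rfl⟩
  have hyc : ‖y‖ ≤ c := mem_closedBall_zero_iff.mp hy
  exact abs_sub_le_of_nonneg_of_le (h₁.radialDist_nonneg y) ((radialDist_le_norm A₁ y).trans hyc)
    (h₂.radialDist_nonneg y) ((radialDist_le_norm A₂ y).trans hyc)

lemma abs_infDist_sub_le_iSup (h₁ : IsStarSet A₁) (h₂ : IsStarSet A₂) {c : ℝ}
    {x : EuclideanSpace ℝ (Fin d)} (hx : ‖x‖ ≤ c) :
    |infDist x A₁ - infDist x A₂| ≤
      ⨆ y : closedBall (0 : EuclideanSpace ℝ (Fin d)) c,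
        |radialDist (y : EuclideanSpace ℝ (Fin d)) A₁ -
          radialDist (y : EuclideanSpace ℝ (Fin d)) A₂| := by
  have hbdd := bddAbove_abs_radialDist_sub h₁ h₂ c
  have hmem {y : EuclideanSpace ℝ (Fin d)} (hy : ‖y‖ ≤ ‖x‖) : y ∈ closedBall 0 c :=
    mem_closedBall_zero_iff.mpr (hy.trans hx)
  rw [abs_sub_le_iff, sub_le_iff_le_add', sub_le_iff_le_add']
  constructor
  · refine h₂.infDist_le_infDist_add h₁ x fun a ha hax => ?_
    simpa [radialDist_of_mem ha, abs_of_nonneg (h₁.radialDist_nonneg a)]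
      using le_ciSup hbdd ⟨a, hmem hax⟩
  · refine h₁.infDist_le_infDist_add h₂ x fun a ha hax => ?_
    simpa [radialDist_of_mem ha, abs_of_nonneg (h₂.radialDist_nonneg a)]
      using le_ciSup hbdd ⟨a, hmem hax⟩

end StarSet

theorem dAW_le_dAWr_general {d : ℕ} (A₁ A₂ : Set (EuclideanSpace ℝ (Fin d)))
    (hA₁ : IsStarSet A₁) (hA₂ : IsStarSet A₂) :
    dAW A₁ A₂ ≤ dAWr A₁ A₂ := by
  have hbdd : BddAbove (Set.range fun j : ℕ => min (1 / ((j : ℝ) + 1))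
      (⨆ y : closedBall (0 : EuclideanSpace ℝ (Fin d)) ((j : ℝ) + 1),
        |radialDist (y : EuclideanSpace ℝ (Fin d)) A₁ -
          radialDist (y : EuclideanSpace ℝ (Fin d)) A₂|)) := by
    refine ⟨1, ?_⟩
    rintro _ ⟨j, rfl⟩
    exact (min_le_left _ _).trans (div_le_one_of_le₀ (by simp) (by positivity))
  refine ciSup_le fun j => (min_le_min le_rfl ?_).trans (le_ciSup hbdd j)
  have : Nonempty (ball (0 : EuclideanSpace ℝ (Fin d)) ((j : ℝ) + 1)) :=
    ⟨⟨0, mem_ball_self (by positivity)⟩⟩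
  exact ciSup_le fun x =>
    abs_infDist_sub_le_iSup hA₁ hA₂ (mem_ball_zero_iff.mp x.2).le

theorem dAW_le_dAWr {d : ℕ} (A₁ A₂ : Set (EuclideanSpace ℝ (Fin d)))
    (hA₁ : IsStarSet A₁) (hA₂ : IsStarSet A₂)
    (hc₁ : IsClosed A₁) (hc₂ : IsClosed A₂) :
    dAW A₁ A₂ ≤ dAWr A₁ A₂ :=
  dAW_le_dAWr_general A₁ A₂ hA₁ hA₂
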